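/- arXiv:2401.10363 — 4 statements merged into one kernel-verified Lean document; each statement's English description precedes it below -/
import Mathlib

section
/- Strong K-step opacity in the sense of Definition 3.1 does not imply strong infinite-step opacity, even if it holds for all K simultaneously: there exists a nondeterministic finite automaton G with secret states X_S such that G is strongly K-step opaque (Definition 3.1) for every non-negative integer K, yet G is not strongly infinite-step opaque. A witness is the automaton with states {0,1,2,3}, events Σ = {a, b, u} with Σ_o = {a, b} and Σ_uo = {u}, initial state 0, secret states X_S = {1}, and transitions 0 --u--> 1, 1 --a--> 2, 2 --b--> 2, 1 --u--> 3, 3 --a--> 2. -/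
namespace SBO

variable {X E : Type}

/-- Extended transition function of an NFA. -/
def ext (δ : X → E → Set X) : X → List E → Set X
  | x, [] => {x}
  | x, σ :: s => ⋃ y ∈ δ x σ, ext δ y s

/-- A run from `x` to `z` labeled by `s`. -/
def IsRun (δ : X → E → Set X) : X → List E → X → Prop
  | x, [], z => x = z
  | x, σ :: s, z => ∃ y ∈ δ x σ, IsRun δ y s z

/-- A run all of whose states lie in `NS`. -/
def IsNSRun (δ : X → E → Set X) (NS : Set X) : X → List E → X → Prop
  | x, [], z => x = z ∧ x ∈ NS
  | x, σ :: s, z => x ∈ NS ∧ ∃ y ∈ δ x σ, IsNSRun δ NS y s z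

/-- Natural projection onto observable events. -/
def proj (Eo : E → Bool) (s : List E) : List E := s.filter Eo

/-- Strong K-step opacity, Definition 3.1 (suffix of the matching run is non-secret). -/
def KSSO (δ : X → E → Set X) (Eo : E → Bool) (X0 XS : Set X) (K : ℕ) : Prop :=
  ∀ x0 ∈ X0, ∀ s1 s2 : List E, ∀ x1 x2 : X,
    IsRun δ x0 s1 x1 → x1 ∈ XS → IsRun δ x1 s2 x2 → (proj Eo s2).length ≤ K →
    ∃ x0' ∈ X0, ∃ s1' s2' : List E, ∃ x1' x2' : X,
      IsRun δ x0' s1' x1' ∧ IsNSRun δ XSᶜ x1' s2' x2' ∧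
      proj Eo s1' = proj Eo s1 ∧ proj Eo s2' = proj Eo s2

/-- Strong K-step opacity, Definition 3.1b (matching run entirely non-secret). -/
def KSSOb (δ : X → E → Set X) (Eo : E → Bool) (X0 XS : Set X) (K : ℕ) : Prop :=
  ∀ x0 ∈ X0, ∀ s1 s2 : List E, ∀ x1 x2 : X,
    IsRun δ x0 s1 x1 → x1 ∈ XS → IsRun δ x1 s2 x2 → (proj Eo s2).length ≤ K →
    ∃ x0' ∈ X0, ∃ s1' s2' : List E, ∃ x1' x2' : X,
      IsNSRun δ XSᶜ x0' s1' x1' ∧ IsNSRun δ XSᶜ x1' s2' x2' ∧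
      proj Eo s1' = proj Eo s1 ∧ proj Eo s2' = proj Eo s2

/-- Standard current-state opacity. -/
def CSO (δ : X → E → Set X) (Eo : E → Bool) (X0 XS : Set X) : Prop :=
  ∀ x0 ∈ X0, ∀ s : List E, (∃ z ∈ ext δ x0 s, z ∈ XS) →
    ∃ x0' ∈ X0, ∃ s' : List E, proj Eo s' = proj Eo s ∧ ∃ z ∈ ext δ x0' s', z ∈ XSᶜ

/-- Strong current-state opacity. -/
def SCSO (δ : X → E → Set X) (Eo : E → Bool) (X0 XS : Set X) : Prop :=
  ∀ x0 ∈ X0, ∀ s : List E, (∃ z ∈ ext δ x0 s, z ∈ XS) →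
    ∃ x0' ∈ X0 \ XS, ∃ t : List E, ∃ x : X, IsNSRun δ XSᶜ x0' t x ∧ proj Eo t = proj Eo s

/-- Strong initial-state opacity. -/
def SISO (δ : X → E → Set X) (Eo : E → Bool) (X0 XS : Set X) : Prop :=
  ∀ x0 ∈ X0 ∩ XS, ∀ s : List E, (ext δ x0 s).Nonempty →
    ∃ x0' ∈ X0 \ XS, ∃ t : List E, ∃ x : X, IsNSRun δ XSᶜ x0' t x ∧ proj Eo t = proj Eo s

/-- Strong infinite-step opacity. -/
def InfSSO (δ : X → E → Set X) (Eo : E → Bool) (X0 XS : Set X) : Prop :=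
  ∀ x0 ∈ X0, ∀ s1 s2 : List E, (ext δ x0 (s1 ++ s2)).Nonempty →
    (∃ z ∈ ext δ x0 s1, z ∈ XS) →
    ∃ x0' ∈ X0 \ XS, ∃ t : List E, ∃ x : X, IsNSRun δ XSᶜ x0' t x ∧
      proj Eo t = proj Eo (s1 ++ s2)

/-- Observer transition on one observable event (empty set = undefined). -/
def obsStep (δ : X → E → Set X) (Eo : E → Bool) (q : Set X) (σ : E) : Set X :=
  {x' | ∃ x ∈ q, ∃ w : List E, (∀ e ∈ w, Eo e = false) ∧ x' ∈ ext δ x (σ :: w)}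

/-- Initial observer state: unobservable reach of the initial states. -/
def obsInit (δ : X → E → Set X) (Eo : E → Bool) (X0 : Set X) : Set X :=
  {x' | ∃ x ∈ X0, ∃ w : List E, (∀ e ∈ w, Eo e = false) ∧ x' ∈ ext δ x w}

/-- Observer transition extended to observation strings. -/
def obsExt (δ : X → E → Set X) (Eo : E → Bool) : Set X → List E → Set X
  | q, [] => q
  | q, σ :: α => obsExt δ Eo (obsStep δ Eo q σ) α

/-- Synchronous step of `Cc(G, Obs(G))`. -/
def ccStep (δ : X → E → Set X) (Eo : E → Bool) (p p' : X × Set X) : Prop :=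
  ∃ σ : E,
    (Eo σ = true ∧ p'.1 ∈ δ p.1 σ ∧ (obsStep δ Eo p.2 σ).Nonempty ∧
      p'.2 = obsStep δ Eo p.2 σ) ∨
    (Eo σ = false ∧ p'.1 ∈ δ p.1 σ ∧ p'.2 = p.2)

/-- Reachability in `Cc(G, Obs(G))`. -/
def ccReach (δ : X → E → Set X) (Eo : E → Bool) (X0 : Set X) (p : X × Set X) : Prop :=
  ∃ x ∈ obsInit δ Eo X0, Relation.ReflTransGen (ccStep δ Eo) (x, obsInit δ Eo X0) p

/-- Deleting a set of transitions from an NFA. -/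
def delTrans (δ : X → E → Set X) (Edel : Set (X × E × X)) : X → E → Set X :=
  fun x σ => {y ∈ δ x σ | (x, σ, y) ∉ Edel}

/-- Transitions of the non-secret subautomaton (secret states deleted). -/
def δdss (δ : X → E → Set X) (XS : Set X) : X → E → Set X :=
  fun x σ => {y ∈ δ x σ | x ∉ XS ∧ y ∉ XS}

/-- One step of the concurrent composition `Cc(Ĝ, G̃_obs)`. -/
def cc2Step (δ δt : X → E → Set X) (Eo : E → Bool) (p : X × Set X) (σ : E) :
    Set (X × Set X) :=
  if Eo σ then {p' | p'.1 ∈ δ p.1 σ ∧ p'.2 = obsStep δt Eo p.2 σ}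
  else {p' | p'.1 ∈ δ p.1 σ ∧ p'.2 = p.2}

/-- Extended transition function of `Cc(Ĝ, G̃_obs)`. -/
def cc2Ext (δ δt : X → E → Set X) (Eo : E → Bool) : (X × Set X) → List E → Set (X × Set X)
  | p, [] => {p}
  | p, σ :: s => ⋃ p' ∈ cc2Step δ δt Eo p σ, cc2Ext δ δt Eo p' s

/-- Initial states of `Cc(Ĝ, G̃_obs)`. -/
def ccInit (δ : X → E → Set X) (Eo : E → Bool) (X0 XS : Set X) : Set (X × Set X) :=
  {p | ∃ α : List E, (∀ e ∈ α, Eo e = true) ∧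
    p.1 ∈ XS ∩ obsExt δ Eo (obsInit δ Eo X0) α ∧
    p.2 = obsExt δ Eo (obsInit δ Eo X0) α ∩ XSᶜ}

end SBO

open SBO

/-- The witness automaton of Remark 3.5: states 0,1,2,3; events a = 0, b = 1, u = 2;
transitions 0 --u--> 1, 1 --a--> 2, 2 --b--> 2, 1 --u--> 3, 3 --a--> 2. -/
def δ8 : Fin 4 → Fin 3 → Set (Fin 4) := fun x e =>
  {y | (x = 0 ∧ e = 2 ∧ y = 1) ∨ (x = 1 ∧ e = 0 ∧ y = 2) ∨ (x = 2 ∧ e = 1 ∧ y = 2) ∨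
       (x = 1 ∧ e = 2 ∧ y = 3) ∨ (x = 3 ∧ e = 0 ∧ y = 2)}

/-!
Both opacity notions ask for a non-secret run with the same observation, but K-SSO only
needs the suffix after the secret visit to be non-secret, while Inf-SSO needs the whole
run from a non-secret initial state to be so. In `δ8`, the secret state `1` can always
silently move on to `3`, from which `1` is unreachable and which has the same observable
future (`a b*`) as `1`; this gives K-SSO for every `K`. But the only initial state `0` leaves
only towards `1`, so the non-secret runs from `0` are empty and cannot match the observation
`a` of the run `0 -u-> 1 -a-> 2`.
-/

namespace SBO

variable {X E : Type} {δ : X → E → Set X}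

theorem mem_ext_iff_isRun {x z : X} {s : List E} : z ∈ ext δ x s ↔ IsRun δ x s z := by
  induction s generalizing x with
  | nil => exact eq_comm
  | cons σ s ih => simp [ext, IsRun, ih]

theorem IsRun.append {x y z : X} {s t : List E} (hs : IsRun δ x s y) (ht : IsRun δ y t z) :
    IsRun δ x (s ++ t) z := by
  induction s generalizing x with
  | nil => exact (show x = y from hs) ▸ ht
  | cons σ s ih =>
    obtain ⟨w, hw, hs⟩ := hs
    exact ⟨w, hw, ih hs⟩

theorem IsNSRun.mono {NS NS' : Set X} (h : NS ⊆ NS') {x z : X} {s : List E}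
    (hs : IsNSRun δ NS x s z) : IsNSRun δ NS' x s z := by
  induction s generalizing x with
  | nil => exact ⟨hs.1, h hs.2⟩
  | cons σ s ih =>
    obtain ⟨hx, w, hw, hs⟩ := hs
    exact ⟨h hx, w, hw, ih hs⟩

theorem IsRun.isNSRun_of_forall_subset {S : Set X} (hS : ∀ y ∈ S, ∀ σ, δ y σ ⊆ S)
    {x z : X} {s : List E} (hx : x ∈ S) (hs : IsRun δ x s z) : IsNSRun δ S x s z := by
  induction s generalizing x with
  | nil => exact ⟨hs, hx⟩
  | cons σ s ih =>
    obtain ⟨w, hw, hs⟩ := hs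
    exact ⟨hx, w, hw, ih (hS x hx σ hw) hs⟩

theorem IsNSRun.start_mem {NS : Set X} {x z : X} {s : List E} (hs : IsNSRun δ NS x s z) :
    x ∈ NS := by
  cases s with
  | nil => exact hs.2
  | cons σ s => exact hs.1

theorem IsNSRun.eq_nil_of_forall_disjoint {NS : Set X} {x z : X} {s : List E}
    (hx : ∀ σ, Disjoint (δ x σ) NS) (hs : IsNSRun δ NS x s z) : s = [] := by
  cases s with
  | nil => rfl
  | cons σ s =>
    obtain ⟨-, w, hw, hs⟩ := hs
    exact absurd hs.start_mem ((hx σ).notMem_of_mem_left hw)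

theorem KSSO_of_unobservable_escape {Eo : E → Bool} {X0 XS : Set X}
    (h : ∀ x ∈ XS, ∃ σ, Eo σ = false ∧ ∃ y ∈ δ x σ, ∀ s z, IsRun δ x s z →
      ∃ t z', IsNSRun δ XSᶜ y t z' ∧ proj Eo t = proj Eo s)
    (K : ℕ) : KSSO δ Eo X0 XS K := by
  intro x0 hx0 s1 s2 x1 x2 hs1 hx1 hs2 _
  obtain ⟨σ, hσ, y, hy, hmatch⟩ := h x1 hx1
  obtain ⟨t, z, ht, hproj⟩ := hmatch s2 x2 hs2
  refine ⟨x0, hx0, s1 ++ [σ], t, y, z, hs1.append ⟨y, hy, rfl⟩, ht, ?_, hproj⟩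
  simp [proj, List.filter_append, hσ]

end SBO

open SBO

theorem δ8_forall_subset_two_three :
    ∀ y ∈ ({2, 3} : Set (Fin 4)), ∀ σ, δ8 y σ ⊆ {2, 3} := by
  intro y hy σ w hw
  simp only [δ8, Set.mem_ofPred_eq] at hw
  simp only [Set.mem_insert_iff, Set.mem_singleton_iff] at hy ⊢
  omega

theorem δ8_zero_subset (σ : Fin 3) : δ8 0 σ ⊆ {1} := by
  intro y hy
  simp only [δ8, Set.mem_ofPred_eq] at hy
  simp only [Set.mem_singleton_iff]
  omega

theorem δ8_isNSRun_of_isRun_three {s : List (Fin 3)} {z : Fin 4} (hs : IsRun δ8 3 s z) :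
    IsNSRun δ8 {1}ᶜ 3 s z :=
  (hs.isNSRun_of_forall_subset δ8_forall_subset_two_three (by simp)).mono (by simp)

theorem δ8_exists_isNSRun_three_of_isRun_one {s : List (Fin 3)} {z : Fin 4}
    (hs : IsRun δ8 1 s z) :
    ∃ t z', IsNSRun δ8 {1}ᶜ 3 t z' ∧ proj (fun e => decide (e ≠ 2)) t =
      proj (fun e => decide (e ≠ 2)) s := by
  suffices ∃ t z', IsRun δ8 3 t z' ∧ proj (fun e => decide (e ≠ 2)) t =
      proj (fun e => decide (e ≠ 2)) s by
    obtain ⟨t, z', ht, hproj⟩ := this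
    exact ⟨t, z', δ8_isNSRun_of_isRun_three ht, hproj⟩
  cases s with
  | nil => exact ⟨[], 3, rfl, rfl⟩
  | cons σ s =>
    obtain ⟨y, hy, hs⟩ := hs
    simp only [δ8, Fin.isValue, one_ne_zero, false_and, true_and, Fin.reduceEq, or_false,
      false_or, Set.mem_ofPred_eq] at hy
    rcases hy with ⟨rfl, rfl⟩ | ⟨rfl, rfl⟩
    · exact ⟨0 :: s, z, ⟨2, by simp [δ8], hs⟩, rfl⟩
    · exact ⟨s, z, hs, by simp [proj]⟩

/-- the witness automaton is K-SSO (Definition 3.1) for every K,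
yet is not strongly infinite-step opaque. -/
theorem KSSO_not_implies_InfSSO :
    (∀ K : ℕ, KSSO δ8 (fun e => decide (e ≠ 2)) {0} {1} K) ∧
      ¬ InfSSO δ8 (fun e => decide (e ≠ 2)) {0} {1} := by
  refine ⟨KSSO_of_unobservable_escape fun x hx => ?_, fun h => ?_⟩
  · obtain rfl : x = 1 := hx
    exact ⟨2, rfl, 3, by simp [δ8], fun s z hs => δ8_exists_isNSRun_three_of_isRun_one hs⟩
  · obtain ⟨x0, ⟨rfl, -⟩, t, x, ht, hproj⟩ := h 0 rfl [2] [0]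
      ⟨2, mem_ext_iff_isRun.2 ⟨1, by simp [δ8], 2, by simp [δ8], rfl⟩⟩
      ⟨1, mem_ext_iff_isRun.2 ⟨1, by simp [δ8], rfl⟩, rfl⟩
    obtain rfl : t = [] := ht.eq_nil_of_forall_disjoint fun σ =>
      Set.disjoint_compl_right_iff_subset.2 (δ8_zero_subset σ)
    exact absurd hproj (by decide)
end

section
/- Let G be an NFA with secret states X_S, let Ĝ be the initial-secret subautomaton of G (the part of G reachable from initial-state set X_S), and let Cc(Ĝ, G̃_obs) be the concurrent composition with state set contained in X̂ × 2^{X \ X_S}, where X̂ is the state set of Ĝ. Then G is strongly K-step opaque (Definition 3.1) with respect to Σ_o and X_S if and only if G is strongly min{K, |X̂|·2^{|X \ X_S|} − 1}-step opaque with respect to Σ_o and X_S. In particular, if G is strongly (|X̂|·2^{|X \ X_S|} − 1)-step opaque, then G is strongly K-step opaque for every non-negative integer K. -/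
open SBO

section Aux

open SBO

variable {X E : Type}

lemma isRun_append {δ : X → E → Set X} : ∀ {s t : List E} {x z : X},
    IsRun δ x (s ++ t) z ↔ ∃ y, IsRun δ x s y ∧ IsRun δ y t z := by
  intro s
  induction s with
  | nil => intro t x z; simp [IsRun]
  | cons a s ih =>
    intro t x z
    constructor
    · rintro ⟨w, hw, hws⟩
      obtain ⟨y, h1, h2⟩ := ih.mp hws
      exact ⟨y, ⟨w, hw, h1⟩, h2⟩
    · rintro ⟨y, ⟨w, hw, h1⟩, h2⟩
      exact ⟨w, hw, ih.mpr ⟨y, h1, h2⟩⟩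

lemma mem_ext_iff {δ : X → E → Set X} : ∀ {s : List E} {x z : X},
    z ∈ ext δ x s ↔ IsRun δ x s z := by
  intro s
  induction s with
  | nil => intro x z; simp [ext, IsRun, eq_comm]
  | cons a s ih => intro x z; simp [ext, IsRun, ih]

lemma isNSRun_start {δ : X → E → Set X} {NS : Set X} :
    ∀ {s : List E} {x z : X}, IsNSRun δ NS x s z → x ∈ NS := by
  intro s x z h
  cases s with
  | nil => exact h.2
  | cons a s => exact h.1

lemma isNSRun_end {δ : X → E → Set X} {NS : Set X} :
    ∀ {s : List E} {x z : X}, IsNSRun δ NS x s z → z ∈ NS := by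
  intro s
  induction s with
  | nil => intro x z h; exact h.1 ▸ h.2
  | cons a s ih =>
    rintro x z ⟨_, y, _, hy⟩
    exact ih hy

lemma isNSRun_append {δ : X → E → Set X} {NS : Set X} :
    ∀ {s t : List E} {x y z : X},
      IsNSRun δ NS x s y → IsNSRun δ NS y t z → IsNSRun δ NS x (s ++ t) z := by
  intro s
  induction s with
  | nil =>
    intro t x y z h1 h2
    obtain ⟨rfl, _⟩ := h1
    exact h2
  | cons a s ih =>
    rintro t x y z ⟨hx, w, hw, hws⟩ h2
    exact ⟨hx, w, hw, ih hws h2⟩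

lemma isNSRun_split {δ : X → E → Set X} {NS : Set X} :
    ∀ {s t : List E} {x z : X}, IsNSRun δ NS x (s ++ t) z →
      ∃ y, IsNSRun δ NS x s y ∧ IsNSRun δ NS y t z := by
  intro s
  induction s with
  | nil => intro t x z h; exact ⟨x, ⟨rfl, isNSRun_start h⟩, h⟩
  | cons a s ih =>
    rintro t x z ⟨hx, w, hw, hws⟩
    obtain ⟨y, h1, h2⟩ := ih hws
    exact ⟨y, ⟨hx, w, hw, h1⟩, h2⟩

lemma filter_eq_cons_split {p : E → Bool} :
    ∀ {t : List E} {a : E} {r : List E}, t.filter p = a :: r →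
      ∃ w t', t = w ++ a :: t' ∧ w.filter p = [] ∧ p a = true ∧ t'.filter p = r := by
  intro t
  induction t with
  | nil => intro a r h; simp at h
  | cons b t ih =>
    intro a r h
    by_cases hb : p b
    · rw [List.filter_cons_of_pos hb] at h
      obtain ⟨rfl, rfl⟩ : b = a ∧ t.filter p = r := ⟨(List.cons.injEq _ _ _ _ ▸ h).1,
        (List.cons.injEq _ _ _ _ ▸ h).2⟩
      exact ⟨[], t, rfl, rfl, hb, rfl⟩
    · rw [List.filter_cons_of_neg (by simpa using hb)] at h
      obtain ⟨w, t', rfl, hw, hpa, ht'⟩ := ih h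
      exact ⟨b :: w, t', rfl, by simp [List.filter_cons, hb, hw], hpa, ht'⟩

lemma filter_eq_append_split {p : E → Bool} :
    ∀ (g1 : List E) {t g2 : List E}, t.filter p = g1 ++ g2 →
      ∃ t1 t2, t = t1 ++ t2 ∧ t1.filter p = g1 ∧ t2.filter p = g2 := by
  intro g1
  induction g1 with
  | nil => exact fun h => ⟨[], _, rfl, rfl, h⟩
  | cons a g1 ih =>
    intro t g2 h
    rw [List.cons_append] at h
    obtain ⟨w, t', rfl, hw, hpa, ht'⟩ := filter_eq_cons_split h
    obtain ⟨t1, t2, rfl, h1, h2⟩ := ih ht'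
    refine ⟨w ++ a :: t1, t2, by simp, ?_, h2⟩
    simp [List.filter_append, hw, List.filter_cons, hpa, h1]

lemma isNSRun_proj_split {δ : X → E → Set X} {NS : Set X} {Eo : E → Bool}
    {x z : X} {t g1 g2 : List E}
    (h : IsNSRun δ NS x t z) (hp : proj Eo t = g1 ++ g2) :
    ∃ t1 t2 m, IsNSRun δ NS x t1 m ∧ IsNSRun δ NS m t2 z ∧
      proj Eo t1 = g1 ∧ proj Eo t2 = g2 := by
  obtain ⟨t1, t2, rfl, h1, h2⟩ := filter_eq_append_split g1 hp
  obtain ⟨m, hm1, hm2⟩ := isNSRun_split h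
  exact ⟨t1, t2, m, hm1, hm2, h1, h2⟩

lemma checkpoints {δ : X → E → Set X} (Eo : E → Bool) :
    ∀ (s : List E) (x z : X), IsRun δ x s z →
      ∃ y : ℕ → X, ∀ i ≤ (proj Eo s).length,
        ∃ u v, IsRun δ x u (y i) ∧ IsRun δ (y i) v z ∧
          proj Eo u = (proj Eo s).take i ∧ proj Eo v = (proj Eo s).drop i := by
  intro s
  induction s with
  | nil =>
    intro x z h
    refine ⟨fun _ => x, fun i hi => ?_⟩
    simp only [proj, List.filter_nil, List.length_nil, Nat.le_zero] at hi
    subst hi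
    exact ⟨[], [], rfl, h, rfl, rfl⟩
  | cons σ s ih =>
    intro x z h
    obtain ⟨w, hw, hrun⟩ := h
    obtain ⟨y', hy'⟩ := ih w z hrun
    by_cases hEo : Eo σ
    · -- observable
      refine ⟨fun i => match i with | 0 => x | (i + 1) => y' i, fun i hi => ?_⟩
      have hps : proj Eo (σ :: s) = σ :: proj Eo s := by
        simp [proj, List.filter_cons, hEo]
      match i with
      | 0 => exact ⟨[], σ :: s, rfl, ⟨w, hw, hrun⟩, by simp [proj], by simp⟩
      | (i + 1) =>
        rw [hps] at hi ⊢
        obtain ⟨u, v, hu, hv, hpu, hpv⟩ := hy' i (by simpa using hi)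
        refine ⟨σ :: u, v, ⟨w, hw, hu⟩, hv, ?_, ?_⟩
        · simp [proj, List.filter_cons, hEo] at hpu ⊢
          rw [hpu]
        · simpa using hpv
    · -- unobservable
      have hps : proj Eo (σ :: s) = proj Eo s := by
        simp [proj, List.filter_cons, hEo]
      refine ⟨y', fun i hi => ?_⟩
      rw [hps] at hi ⊢
      obtain ⟨u, v, hu, hv, hpu, hpv⟩ := hy' i hi
      refine ⟨σ :: u, v, ⟨w, hw, hu⟩, hv, ?_, hpv⟩
      simpa [proj, List.filter_cons, hEo] using hpu

end Aux

section MainLemma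

open SBO

lemma KSSO_all_of_bound {X E : Type} [Fintype X] (δ : X → E → Set X) (Eo : E → Bool)
    (X0 XS : Set X)
    (h : KSSO δ Eo X0 XS ({x : X | ∃ x1 ∈ XS, ∃ s : List E, x ∈ ext δ x1 s}.ncard *
          2 ^ (XSᶜ : Set X).ncard - 1)) :
    ∀ K : ℕ, KSSO δ Eo X0 XS K := by
  classical
  set Xh := {x : X | ∃ x1 ∈ XS, ∃ s : List E, x ∈ ext δ x1 s} with hXh
  set N := Xh.ncard * 2 ^ (XSᶜ : Set X).ncard - 1 with hN
  suffices H : ∀ L (s2 : List E), (proj Eo s2).length ≤ L →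
      ∀ x0 ∈ X0, ∀ (s1 : List E) (x1 x2 : X),
        IsRun δ x0 s1 x1 → x1 ∈ XS → IsRun δ x1 s2 x2 →
        ∃ x0' ∈ X0, ∃ s1' s2' : List E, ∃ x1' x2' : X,
          IsRun δ x0' s1' x1' ∧ IsNSRun δ XSᶜ x1' s2' x2' ∧
          proj Eo s1' = proj Eo s1 ∧ proj Eo s2' = proj Eo s2 by
    intro K x0 hx0 s1 s2 x1 x2 r1 hS r2 _
    exact H (proj Eo s2).length s2 le_rfl x0 hx0 s1 x1 x2 r1 hS r2
  intro L
  induction L using Nat.strong_induction_on with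
  | _ L ih =>
  intro s2 hlen x0 hx0 s1 x1 x2 r1 hS r2
  by_cases hsmall : (proj Eo s2).length ≤ N
  · exact h x0 hx0 s1 s2 x1 x2 r1 hS r2 hsmall
  push_neg at hsmall
  set α := proj Eo s2 with hα
  set L' := α.length with hL'
  obtain ⟨y, hy⟩ := checkpoints Eo s2 x1 x2 r2
  have hymem : ∀ i : Fin (L' + 1), y i.1 ∈ Xh := by
    intro i
    obtain ⟨u, v, hu, hv, _, _⟩ := hy i.1 (Nat.lt_succ_iff.mp i.2)
    exact ⟨x1, hS, u, mem_ext_iff.mpr hu⟩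
  set Qf : ℕ → Set X := fun i =>
    {z | ∃ x0' ∈ X0, ∃ s1' t x1', IsRun δ x0' s1' x1' ∧ IsNSRun δ XSᶜ x1' t z ∧
      proj Eo s1' = proj Eo s1 ∧ proj Eo t = α.take i} with hQf
  have hQsub : ∀ i z, z ∈ Qf i → z ∈ (XSᶜ : Set X) := by
    rintro i z ⟨x0', _, s1', t, x1', _, hns, _, _⟩
    exact isNSRun_end hns
  haveI : Fintype ↥Xh := Fintype.ofFinite _
  set F : Fin (L' + 1) → ↥Xh × Set ↥(XSᶜ : Set X) :=
    fun i => (⟨y i.1, hymem i⟩, {z | z.1 ∈ Qf i.1}) with hF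
  have hcard : Fintype.card (↥Xh × Set ↥(XSᶜ : Set X)) < Fintype.card (Fin (L' + 1)) := by
    rw [Fintype.card_fin, Fintype.card_prod, Fintype.card_set]
    have h1 : Fintype.card ↥Xh = Xh.ncard := by
      rw [← Nat.card_eq_fintype_card, Nat.card_coe_set_eq]
    have h2 : Fintype.card ↥(XSᶜ : Set X) = (XSᶜ : Set X).ncard := by
      rw [← Nat.card_eq_fintype_card, Nat.card_coe_set_eq]
    rw [h1, h2]
    omega
  have core : ∀ i j : Fin (L' + 1), (i : ℕ) < (j : ℕ) → F i = F j →
      ∃ x0' ∈ X0, ∃ s1' s2' : List E, ∃ x1' x2' : X,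
        IsRun δ x0' s1' x1' ∧ IsNSRun δ XSᶜ x1' s2' x2' ∧
        proj Eo s1' = proj Eo s1 ∧ proj Eo s2' = α := by
    intro i j hij hFij
    have hyij : y i.1 = y j.1 := congrArg (fun p => (p.1 : X)) hFij
    have hQset : {z : ↥(XSᶜ : Set X) | z.1 ∈ Qf i.1} = {z | z.1 ∈ Qf j.1} :=
      congrArg Prod.snd hFij
    have hQij : Qf i.1 = Qf j.1 := by
      ext z
      constructor
      · intro hz
        have hz' : (⟨z, hQsub _ _ hz⟩ : ↥(XSᶜ : Set X)) ∈
            {z : ↥(XSᶜ : Set X) | z.1 ∈ Qf i.1} := hz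
        rw [hQset] at hz'
        exact hz'
      · intro hz
        have hz' : (⟨z, hQsub _ _ hz⟩ : ↥(XSᶜ : Set X)) ∈
            {z : ↥(XSᶜ : Set X) | z.1 ∈ Qf j.1} := hz
        rw [← hQset] at hz'
        exact hz'
    have hiL : i.1 ≤ L' := Nat.lt_succ_iff.mp i.2
    have hjL : j.1 ≤ L' := Nat.lt_succ_iff.mp j.2
    obtain ⟨ui, _, hui, _, hpui, _⟩ := hy i.1 hiL
    obtain ⟨_, vj, _, hvj, _, hpvj⟩ := hy j.1 hjL
    have hrun'' : IsRun δ x1 (ui ++ vj) x2 :=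
      isRun_append.mpr ⟨y i.1, hui, by rw [hyij]; exact hvj⟩
    have hproj'' : proj Eo (ui ++ vj) = α.take i.1 ++ α.drop j.1 := by
      show (ui ++ vj).filter Eo = _
      rw [List.filter_append]
      exact congrArg₂ (· ++ ·) hpui hpvj
    have hlen'' : (proj Eo (ui ++ vj)).length < L := by
      rw [hproj'', List.length_append, List.length_take, List.length_drop]
      have : L' ≤ L := hlen
      omega
    obtain ⟨x0', hx0', s1', t', x1', x2'', hr1', hns', hps1', hpt'⟩ :=
      ih _ hlen'' (ui ++ vj) le_rfl x0 hx0 s1 x1 x2 r1 hS hrun''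
    rw [hproj''] at hpt'
    obtain ⟨t1, t2, m, hm1, hm2, hpt1, hpt2⟩ := isNSRun_proj_split hns' hpt'
    have hmQ : m ∈ Qf i.1 := ⟨x0', hx0', s1', t1, x1', hr1', hm1, hps1', hpt1⟩
    rw [hQij] at hmQ
    obtain ⟨x0'', hx0'', s1'', t1'', x1'', hr1'', hm1'', hps1'', hpt1''⟩ := hmQ
    refine ⟨x0'', hx0'', s1'', t1'' ++ t2, x1'', x2'', hr1'',
      isNSRun_append hm1'' hm2, hps1'', ?_⟩
    show (t1'' ++ t2).filter Eo = α
    rw [List.filter_append]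
    have : t1''.filter Eo ++ t2.filter Eo = α.take j.1 ++ α.drop j.1 :=
      congrArg₂ (· ++ ·) hpt1'' hpt2
    rw [this, List.take_append_drop]
  obtain ⟨i, j, hne, hFij⟩ := Fintype.exists_ne_map_eq_of_card_lt F hcard
  rcases lt_or_gt_of_ne hne with hij | hij
  · exact core i j hij hFij
  · exact core j i hij hFij.symm

end MainLemma


/-- an upper bound on K for K-SSO (Definition 3.1): G is K-SSO iff it is
min{K, |X̂|·2^{|X \ X_S|} − 1}-SSO, where X̂ is the set of states of the initial-secret
subautomaton (states reachable from X_S); in particular (|X̂|·2^{|X \ X_S|} − 1)-SSO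
implies K-SSO for every K. -/
theorem KSSO_upper_bound {X E : Type} [Fintype X] (δ : X → E → Set X) (Eo : E → Bool)
    (X0 XS : Set X) :
    (∀ K : ℕ, KSSO δ Eo X0 XS K ↔
        KSSO δ Eo X0 XS
          (min K ({x : X | ∃ x1 ∈ XS, ∃ s : List E, x ∈ ext δ x1 s}.ncard *
              2 ^ (XSᶜ : Set X).ncard - 1))) ∧
    (KSSO δ Eo X0 XS
        ({x : X | ∃ x1 ∈ XS, ∃ s : List E, x ∈ ext δ x1 s}.ncard *
          2 ^ (XSᶜ : Set X).ncard - 1) →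
      ∀ K : ℕ, KSSO δ Eo X0 XS K) := by
  constructor
  · intro K
    constructor
    · intro hK x0 hx0 s1 s2 x1 x2 r1 hS r2 hlen
      exact hK x0 hx0 s1 s2 x1 x2 r1 hS r2 (hlen.trans (min_le_left _ _))
    · intro hmin
      rcases le_or_gt K ({x : X | ∃ x1 ∈ XS, ∃ s : List E, x ∈ ext δ x1 s}.ncard *
          2 ^ (XSᶜ : Set X).ncard - 1) with hK | hK
      · rwa [min_eq_left hK] at hmin
      · rw [min_eq_right hK.le] at hmin
        exact KSSO_all_of_bound δ Eo X0 XS hmin K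
  · exact fun hb K => KSSO_all_of_bound δ Eo X0 XS hb K
end

section
/- In the parallel composition of an NFA G with its observer Obs(G): (1) for every reachable observer state q and every x ∈ q, the pair (x, q) is a reachable state of the composition; and (2) a pair (x, q) is a reachable state of the composition if and only if there exists a string s ∈ L(G) leading from some initial state of G to x such that P(s) leads the observer from its initial state to q. -/
open SBO

/-! For an observable string `α`, the observer state reached by `α` is the state estimate of `α`:
the set of states reached from `X0` by strings whose projection is `α`. A run of the composition
is a run of `G` with the observer tracking its projection, so the reachable pairs are exactly
`(x, estimate of P(s))` for the runs `s` of `G` ending in `x`; the run itself witnesses that each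
observer step along it is defined. -/

namespace SBO

variable {X E : Type} {δ : X → E → Set X} {Eo : E → Bool}

theorem mem_ext_append {s t : List E} {x z : X} :
    z ∈ ext δ x (s ++ t) ↔ ∃ y ∈ ext δ x s, z ∈ ext δ y t := by
  induction s generalizing x with
  | nil => simp [ext]
  | cons σ s ih =>
    simp only [List.cons_append, ext, Set.mem_iUnion, exists_prop, ih]
    exact ⟨fun ⟨y, hy, w, hw, hz⟩ => ⟨w, ⟨y, hy, hw⟩, hz⟩, fun ⟨w, ⟨y, hy, hw⟩, hz⟩ => ⟨y, hy, w, hw, hz⟩⟩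

theorem mem_ext_concat {s : List E} {σ : E} {x z : X} :
    z ∈ ext δ x (s ++ [σ]) ↔ ∃ y ∈ ext δ x s, z ∈ δ y σ := by
  simp [mem_ext_append, ext]

theorem proj_eq_nil_iff {w : List E} : proj Eo w = [] ↔ ∀ e ∈ w, Eo e = false := by
  simp [proj]

theorem proj_concat_of_observable {s : List E} {σ : E} (hσ : Eo σ = true) :
    proj Eo (s ++ [σ]) = proj Eo s ++ [σ] := by
  simp [proj, hσ]

theorem proj_concat_of_unobservable {s : List E} {σ : E} (hσ : Eo σ = false) :
    proj Eo (s ++ [σ]) = proj Eo s := by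
  simp [proj, hσ]

/-- The unobservable events preceding the last observable one are absorbed into the prefix. -/
theorem proj_eq_concat_iff {t β : List E} {σ : E} (hσ : Eo σ = true) :
    proj Eo t = β ++ [σ] ↔
      ∃ s w, t = s ++ σ :: w ∧ proj Eo s = β ∧ proj Eo w = [] := by
  constructor
  · intro h
    obtain ⟨t₁, t₂, rfl, h₁, h₂⟩ := List.filter_eq_append_iff.mp h
    obtain ⟨l, w, rfl, hl, -, hw⟩ := List.filter_eq_cons_iff.mp h₂
    refine ⟨t₁ ++ l, w, by simp, ?_, hw⟩
    simp [proj, h₁, List.filter_eq_nil_iff.mpr hl]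
  · rintro ⟨s, w, rfl, rfl, hw⟩
    simp_all [proj]

theorem obsExt_append (q : Set X) (α β : List E) :
    obsExt δ Eo q (α ++ β) = obsExt δ Eo (obsExt δ Eo q α) β := by
  induction α generalizing q with
  | nil => rfl
  | cons σ α ih => exact ih _

theorem obsExt_concat (q : Set X) (α : List E) (σ : E) :
    obsExt δ Eo q (α ++ [σ]) = obsStep δ Eo (obsExt δ Eo q α) σ :=
  obsExt_append q α [σ]

variable (δ Eo) in
def stateEstimate (X0 : Set X) (β : List E) : Set X :=
  {x | ∃ x0 ∈ X0, ∃ s, proj Eo s = β ∧ x ∈ ext δ x0 s}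

variable {X0 : Set X}

theorem obsInit_eq_stateEstimate_nil : obsInit δ Eo X0 = stateEstimate δ Eo X0 [] := by
  ext x
  simp only [obsInit, stateEstimate, proj_eq_nil_iff, Set.mem_ofPred_eq]

theorem obsStep_stateEstimate {β : List E} {σ : E} (hσ : Eo σ = true) :
    obsStep δ Eo (stateEstimate δ Eo X0 β) σ = stateEstimate δ Eo X0 (β ++ [σ]) := by
  ext x
  simp only [obsStep, stateEstimate, proj_eq_concat_iff hσ, Set.mem_ofPred_eq]
  constructor
  · rintro ⟨y, ⟨x0, hx0, s, hs, hy⟩, w, hw, hx⟩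
    exact ⟨x0, hx0, s ++ σ :: w, ⟨s, w, rfl, hs, proj_eq_nil_iff.mpr hw⟩,
      mem_ext_append.mpr ⟨y, hy, hx⟩⟩
  · rintro ⟨x0, hx0, _, ⟨s, w, rfl, hs, hw⟩, hx⟩
    obtain ⟨y, hy, hx⟩ := mem_ext_append.mp hx
    exact ⟨y, ⟨x0, hx0, s, hs, hy⟩, w, proj_eq_nil_iff.mp hw, hx⟩

theorem obsExt_stateEstimate {α β : List E} (hα : ∀ e ∈ α, Eo e = true) :
    obsExt δ Eo (stateEstimate δ Eo X0 β) α = stateEstimate δ Eo X0 (β ++ α) := by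
  induction α generalizing β with
  | nil => simp [obsExt]
  | cons σ α ih =>
    rw [obsExt, obsStep_stateEstimate (hα σ List.mem_cons_self),
      ih fun e he => hα e (List.mem_cons_of_mem σ he), List.append_assoc, List.singleton_append]

theorem obsExt_obsInit {α : List E} (hα : ∀ e ∈ α, Eo e = true) :
    obsExt δ Eo (obsInit δ Eo X0) α = stateEstimate δ Eo X0 α := by
  rw [obsInit_eq_stateEstimate_nil, obsExt_stateEstimate hα, List.nil_append]

theorem mem_obsExt_obsInit_proj {x0 x : X} {s : List E} (hx0 : x0 ∈ X0)
    (hx : x ∈ ext δ x0 s) : x ∈ obsExt δ Eo (obsInit δ Eo X0) (proj Eo s) := by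
  rw [obsExt_obsInit (α := proj Eo s) fun _ => List.of_mem_filter]
  exact ⟨x0, hx0, s, rfl, hx⟩

theorem ccReach.tail {p p' : X × Set X} (h : ccReach δ Eo X0 p) (hs : ccStep δ Eo p p') :
    ccReach δ Eo X0 p' :=
  let ⟨x, hx, hp⟩ := h
  ⟨x, hx, hp.tail hs⟩

theorem ccReach_of_mem_ext {x0 x : X} {s : List E} (hx0 : x0 ∈ X0) (hx : x ∈ ext δ x0 s) :
    ccReach δ Eo X0 (x, obsExt δ Eo (obsInit δ Eo X0) (proj Eo s)) := by
  induction s using List.reverseRecOn generalizing x with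
  | nil =>
    obtain rfl : x = x0 := hx
    exact ⟨x, mem_obsExt_obsInit_proj (s := []) hx0 rfl, .refl⟩
  | append_singleton s σ ih =>
    obtain ⟨y, hy, hxy⟩ := mem_ext_concat.mp hx
    cases hσ : Eo σ
    · rw [proj_concat_of_unobservable hσ]
      exact (ih hy).tail ⟨σ, .inr ⟨hσ, hxy, rfl⟩⟩
    · have hx_step : x ∈ obsStep δ Eo (obsExt δ Eo (obsInit δ Eo X0) (proj Eo s)) σ :=
        ⟨y, mem_obsExt_obsInit_proj hx0 hy, [], by simp, by simpa [ext] using hxy⟩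
      rw [proj_concat_of_observable hσ, obsExt_concat]
      exact (ih hy).tail ⟨σ, .inl ⟨hσ, hxy, ⟨x, hx_step⟩, rfl⟩⟩

theorem exists_mem_ext_of_ccReach {p : X × Set X} (h : ccReach δ Eo X0 p) :
    ∃ x0 ∈ X0, ∃ s, p.1 ∈ ext δ x0 s ∧ obsExt δ Eo (obsInit δ Eo X0) (proj Eo s) = p.2 := by
  obtain ⟨y, hy, hp⟩ := h
  induction hp with
  | refl =>
    rw [obsInit_eq_stateEstimate_nil] at hy
    obtain ⟨x0, hx0, s, hs, hys⟩ := hy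
    exact ⟨x0, hx0, s, hys, by rw [hs]; rfl⟩
  | tail _ hstep ih =>
    obtain ⟨x0, hx0, s, hs, hq⟩ := ih
    obtain ⟨σ, ⟨hσ, hδ, -, hc⟩ | ⟨hσ, hδ, hc⟩⟩ := hstep
    · refine ⟨x0, hx0, s ++ [σ], mem_ext_concat.mpr ⟨_, hs, hδ⟩, ?_⟩
      rw [proj_concat_of_observable hσ, obsExt_concat, hq, hc]
    · refine ⟨x0, hx0, s ++ [σ], mem_ext_concat.mpr ⟨_, hs, hδ⟩, ?_⟩
      rw [proj_concat_of_unobservable hσ, hq, hc]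

theorem ccReach_iff {x : X} {q : Set X} :
    ccReach δ Eo X0 (x, q) ↔
      ∃ x0 ∈ X0, ∃ s, x ∈ ext δ x0 s ∧ obsExt δ Eo (obsInit δ Eo X0) (proj Eo s) = q :=
  ⟨exists_mem_ext_of_ccReach, fun ⟨_, hx0, _, hx, hq⟩ => hq ▸ ccReach_of_mem_ext hx0 hx⟩

end SBO

/-- properties of the composition `Cc(G, Obs(G))`. -/
theorem ccGObs_correct {X E : Type} (δ : X → E → Set X) (Eo : E → Bool) (X0 : Set X) :
    (∀ α : List E, (∀ e ∈ α, Eo e = true) →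
      ∀ x ∈ obsExt δ Eo (obsInit δ Eo X0) α,
        ccReach δ Eo X0 (x, obsExt δ Eo (obsInit δ Eo X0) α)) ∧
    (∀ x : X, ∀ q : Set X, ccReach δ Eo X0 (x, q) ↔
      ∃ x0 ∈ X0, ∃ s : List E, x ∈ ext δ x0 s ∧
        obsExt δ Eo (obsInit δ Eo X0) (proj Eo s) = q) := by
  refine ⟨fun α hα x hx => ?_, fun x q => ccReach_iff⟩
  rw [obsExt_obsInit hα] at hx
  obtain ⟨x0, hx0, s, rfl, hxs⟩ := hx
  exact ccReach_of_mem_ext hx0 hxs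
end

section
/- Every initial state (x, q̃₀) of the concurrent composition Cc(Ĝ, G̃_obs) corresponds to at least one reachable state (x, q) of the composition Cc(G, Obs(G)) with q̃₀ = q \ X_S: that is, for each q ∈ X_obs^S ∪ X_obs^hyb and each x ∈ X_S ∩ q, the pair (x, q) is reachable in Cc(G, Obs(G)). -/
open SBO

lemma unobs_run {X E : Type} (δ : X → E → Set X) (Eo : E → Bool) (Q : Set X) :
    ∀ w : List E, (∀ e ∈ w, Eo e = false) → ∀ z y : X, y ∈ ext δ z w →
      Relation.ReflTransGen (ccStep δ Eo) (z, Q) (y, Q) := by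
  intro w
  induction w with
  | nil =>
    intro _ z y hy
    simp [ext] at hy
    subst hy; exact Relation.ReflTransGen.refl
  | cons e w ih =>
    intro hw z y hy
    simp only [ext, Set.mem_iUnion] at hy
    obtain ⟨u, hu, hyu⟩ := hy
    exact Relation.ReflTransGen.head
      (show ccStep δ Eo (z, Q) (u, Q) from ⟨e, Or.inr ⟨hw e (by simp), hu, rfl⟩⟩)
      (ih (fun e' he' => hw e' (by simp [he'])) u y hyu)

lemma obsExt_reach {X E : Type} (δ : X → E → Set X) (Eo : E → Bool) :
    ∀ α : List E, (∀ e ∈ α, Eo e = true) → ∀ q : Set X, ∀ x ∈ obsExt δ Eo q α,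
      ∃ x0 ∈ q, Relation.ReflTransGen (ccStep δ Eo) (x0, q) (x, obsExt δ Eo q α) := by
  intro α
  induction α with
  | nil =>
    intro _ q x hx
    exact ⟨x, hx, Relation.ReflTransGen.refl⟩
  | cons σ α ih =>
    intro hα q x hx
    have hx' : x ∈ obsExt δ Eo (obsStep δ Eo q σ) α := hx
    obtain ⟨y, hy, hpath⟩ := ih (fun e he => hα e (by simp [he])) (obsStep δ Eo q σ) x hx'
    obtain ⟨x0, hx0, w, hw, hyext⟩ := hy
    simp only [ext, Set.mem_iUnion] at hyext
    obtain ⟨z, hz, hyz⟩ := hyext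
    refine ⟨x0, hx0, ?_⟩
    have step1 : ccStep δ Eo (x0, q) (z, obsStep δ Eo q σ) :=
      ⟨σ, Or.inl ⟨hα σ (by simp), hz, ⟨y, ⟨x0, hx0, w, hw, by
        simp only [ext, Set.mem_iUnion]; exact ⟨z, hz, hyz⟩⟩⟩, rfl⟩⟩
    exact Relation.ReflTransGen.head step1
      ((unobs_run δ Eo (obsStep δ Eo q σ) w hw z y hyz).trans hpath)

/-- Proposition 4.2: every initial state `(x, q ∩ X_NS)` of
`Cc(Ĝ, G̃_obs)` arises from a reachable state `(x, q)` of `Cc(G, Obs(G))`: for every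
observer state `q` (reached by observation α) and every `x ∈ X_S ∩ q`, the pair
`(x, q)` is reachable in `Cc(G, Obs(G))`. -/
theorem ccInit_corresponds {X E : Type} (δ : X → E → Set X) (Eo : E → Bool)
    (X0 XS : Set X) :
    ∀ α : List E, (∀ e ∈ α, Eo e = true) →
      ∀ x ∈ XS ∩ obsExt δ Eo (obsInit δ Eo X0) α,
        ccReach δ Eo X0 (x, obsExt δ Eo (obsInit δ Eo X0) α) := by
  intro α hα x hx
  obtain ⟨x0, hx0, hpath⟩ := obsExt_reach δ Eo α hα (obsInit δ Eo X0) x hx.2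
  exact ⟨x0, hx0, hpath⟩
end
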